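/- Let G be a connected non-bipartite finite simple graph on the vertex set [n] = {1,…,n}. Then Ω(Q_G) = conv((Q_G × {1}) ∪ ((−Q_G) × {−1})) ⊂ ℝ^n is a reflexive polytope of dimension n. -/

import Mathlib

/-- `P × {1} ⊆ ℝ^{d+1}`. -/
def liftTop {d : ℕ} (P : Set (Fin d → ℝ)) : Set (Fin (d + 1) → ℝ) :=
  (fun p => Fin.snoc p (1 : ℝ)) '' P

/-- `(−Q) × {−1} ⊆ ℝ^{d+1}`. -/
def liftBot {d : ℕ} (Q : Set (Fin d → ℝ)) : Set (Fin (d + 1) → ℝ) :=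
  (fun q => Fin.snoc (-q) (-1 : ℝ)) '' Q

/-- `Ω(P,Q) = conv((P × {1}) ∪ ((−Q) × {−1})) ⊆ ℝ^{d+1}`. -/
def Omega {d : ℕ} (P Q : Set (Fin d → ℝ)) : Set (Fin (d + 1) → ℝ) :=
  convexHull ℝ (liftTop P ∪ liftBot Q)

/-- A point of `ℝ^m` is a lattice point if all of its coordinates are integers. -/
def IsLatticePt {m : ℕ} (x : Fin m → ℝ) : Prop := ∀ i, ∃ z : ℤ, x i = (z : ℝ)

/-- The dual polytope `R^∨ = {y : ⟨x,y⟩ ≤ 1 for all x ∈ R}`. -/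
def dualPolytope {m : ℕ} (R : Set (Fin m → ℝ)) : Set (Fin m → ℝ) :=
  {y | ∀ x ∈ R, ∑ i, x i * y i ≤ 1}

/-- A full-dimensional lattice polytope `R ⊆ ℝ^m` is reflexive if the origin is in
its interior and all vertices (extreme points) of the dual polytope are lattice points. -/
def IsReflexive {m : ℕ} (R : Set (Fin m → ℝ)) : Prop :=
  (0 : Fin m → ℝ) ∈ interior R ∧
    ∀ y ∈ Set.extremePoints ℝ (dualPolytope R), IsLatticePt y

/-- For a connected non-bipartite graph `G` on the vertex set `Fin (n+1)`,
the full-dimensional copy `Q_G ⊆ ℝ^n` of the edge polytope of `G`, obtained as the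
convex hull of the vectors `e_i + e_j` (for edges `{i,j}` of `G`) with the first
coordinate deleted. -/
def fullEdgePolytope {n : ℕ} (G : SimpleGraph (Fin (n + 1))) : Set (Fin n → ℝ) :=
  convexHull ℝ {x | ∃ i j : Fin (n + 1), G.Adj i j ∧
    x = fun k : Fin n =>
      ((Pi.single i 1 + Pi.single j 1 : Fin (n + 1) → ℝ)) k.succ}

namespace Stmt8Aux

open SimpleGraph

noncomputable section

/-! ### Walk parity lemmas -/

/-- If every function vanishing-in-pairs along the edges of `H` is zero, then every
vertex lies on an odd closed walk. -/
theorem exists_odd_closed_walk_of_rigid {V : Type*} (H : SimpleGraph V)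
    (hK : ∀ δ : V → ℝ, (∀ i j, H.Adj i j → δ i + δ j = 0) → δ = 0) (v : V) :
    ∃ p : H.Walk v v, Odd p.length := by
  by_contra hno
  push_neg at hno
  classical
  set δ : V → ℝ := fun u =>
    (if ∃ p : H.Walk v u, Even p.length then (1 : ℝ) else 0) -
      (if ∃ p : H.Walk v u, Odd p.length then (1 : ℝ) else 0) with hδdef
  have hmutual : ∀ u, (∃ p : H.Walk v u, Even p.length) →
      (∃ p : H.Walk v u, Odd p.length) → False := by
    rintro u ⟨p, a, ha⟩ ⟨q, b, hb⟩
    refine hno (p.append q.reverse) ⟨a + b, ?_⟩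
    rw [Walk.length_append, Walk.length_reverse]
    omega
  have hstepE : ∀ {i j : V}, H.Adj i j → (∃ p : H.Walk v i, Even p.length) →
      ∃ p : H.Walk v j, Odd p.length := by
    rintro i j h ⟨p, a, ha⟩
    exact ⟨p.concat h, a, by rw [Walk.length_concat]; omega⟩
  have hstepO : ∀ {i j : V}, H.Adj i j → (∃ p : H.Walk v i, Odd p.length) →
      ∃ p : H.Walk v j, Even p.length := by
    rintro i j h ⟨p, a, ha⟩
    exact ⟨p.concat h, a + 1, by rw [Walk.length_concat]; omega⟩
  have hprop : ∀ i j, H.Adj i j → δ i + δ j = 0 := by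
    intro i j h
    by_cases hEi : ∃ p : H.Walk v i, Even p.length
    · have hOj := hstepE h hEi
      have hOi : ¬∃ p : H.Walk v i, Odd p.length := fun hOi => hmutual i hEi hOi
      have hEj : ¬∃ p : H.Walk v j, Even p.length := fun hEj => hOi (hstepE h.symm hEj)
      simp [hδdef, hEi, hOi, hEj, hOj]
    · by_cases hOi : ∃ p : H.Walk v i, Odd p.length
      · have hEj := hstepO h hOi
        have hOj : ¬∃ p : H.Walk v j, Odd p.length := fun hOj => hmutual j hEj hOj
        simp [hδdef, hEi, hOi, hEj, hOj]
      · have hEj : ¬∃ p : H.Walk v j, Even p.length := fun hEj => hOi (hstepE h.symm hEj)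
        have hOj : ¬∃ p : H.Walk v j, Odd p.length := fun hOj => hEi (hstepO h.symm hOj)
        simp [hδdef, hEi, hOi, hEj, hOj]
  have h0 := congrFun (hK δ hprop) v
  have hEv : ∃ p : H.Walk v v, Even p.length := ⟨Walk.nil, 0, by simp⟩
  have hOv : ¬∃ p : H.Walk v v, Odd p.length := by
    rintro ⟨p, hp⟩; exact hno p hp
  rw [hδdef] at h0
  simp only [hEv, hOv, if_pos, if_neg, if_true, if_false, Pi.zero_apply] at h0
  norm_num at h0

/-- In a connected graph which is not 2-colorable, every vertex lies on an odd
closed walk. -/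
theorem exists_odd_closed_walk {V : Type*} (G : SimpleGraph V) (hconn : G.Connected)
    (hnb : ¬ G.Colorable 2) (v : V) : ∃ p : G.Walk v v, Odd p.length := by
  by_contra hno
  push_neg at hno
  classical
  refine hnb ⟨SimpleGraph.Coloring.mk
    (fun u => if ∃ p : G.Walk v u, Odd p.length then (1 : Fin 2) else 0) ?_⟩
  intro u w huw hEq
  by_cases hu : ∃ p : G.Walk v u, Odd p.length
  · have hw : ∃ p : G.Walk v w, Odd p.length := by
      by_contra hw
      simp [hu, hw] at hEq
    obtain ⟨p, a, ha⟩ := hu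
    obtain ⟨q, b, hb⟩ := hw
    refine hno ((p.concat huw).append q.reverse) ⟨a + b + 1, ?_⟩
    rw [Walk.length_append, Walk.length_concat, Walk.length_reverse]
    omega
  · have hw : ¬∃ p : G.Walk v w, Odd p.length := by
      by_contra hw
      simp [hu, hw] at hEq
    obtain ⟨p⟩ := hconn.preconnected v u
    have hpe : Even p.length := by
      rcases Nat.even_or_odd p.length with h | h
      · exact h
      · exact absurd ⟨p, h⟩ hu
    obtain ⟨a, ha⟩ := hpe
    exact hw ⟨p.concat huw, a, by rw [Walk.length_concat]; omega⟩

/-! ### Vectors -/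

variable {n : ℕ}

/-- Generators of the (dimension-reduced) edge polytope. -/
def gen (i j : Fin (n + 1)) : Fin n → ℝ :=
  fun k : Fin n => (Pi.single i 1 + Pi.single j 1 : Fin (n + 1) → ℝ) k.succ

/-- The lifted generators `(gen i j, 1)`. -/
def lgen (i j : Fin (n + 1)) : Fin (n + 1) → ℝ := Fin.snoc (gen i j) 1

/-- Half of the lifted generator, `lgen i j = phi i + phi j`. -/
def phi (i : Fin (n + 1)) : Fin (n + 1) → ℝ :=
  Fin.snoc (fun k : Fin n => (Pi.single i 1 : Fin (n + 1) → ℝ) k.succ) (1 / 2)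

lemma lgen_eq_phi (i j : Fin (n + 1)) : lgen i j = phi i + phi j := by
  funext m
  refine Fin.lastCases ?_ ?_ m
  · simp [lgen, phi]; norm_num
  · intro k
    simp [lgen, phi, gen]

/-- The affine transformation sending `y` to its "vertex weights". -/
def bvec (y : Fin (n + 1) → ℝ) : Fin (n + 1) → ℝ :=
  Fin.cons (y (Fin.last n) / 2) (fun k => y (Fin.castSucc k) + y (Fin.last n) / 2)

lemma bvec_zero : bvec (0 : Fin (n + 1) → ℝ) = 0 := by
  funext m
  refine Fin.cases ?_ ?_ m <;> simp [bvec]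

lemma bvec_add_smul (y d : Fin (n + 1) → ℝ) (c : ℝ) (m : Fin (n + 1)) :
    bvec (y + c • d) m = bvec y m + c * bvec d m := by
  refine Fin.cases ?_ ?_ m <;> intros <;> simp [bvec] <;> ring

lemma dot_snoc (p : Fin n → ℝ) (c : ℝ) (y : Fin (n + 1) → ℝ) :
    ∑ m, (Fin.snoc p c : Fin (n + 1) → ℝ) m * y m =
      (∑ k, p k * y (Fin.castSucc k)) + c * y (Fin.last n) := by
  rw [Fin.sum_univ_castSucc]
  simp

lemma single_dot (y : Fin (n + 1) → ℝ) (i : Fin (n + 1)) :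
    ∑ k : Fin n, (Pi.single i (1 : ℝ) : Fin (n + 1) → ℝ) k.succ * y (Fin.castSucc k) =
      bvec y i - y (Fin.last n) / 2 := by
  refine Fin.cases ?_ ?_ i
  · have h : ∀ k : Fin n, (Pi.single (0 : Fin (n + 1)) (1 : ℝ) : Fin (n + 1) → ℝ) k.succ = 0 :=
      fun k => Pi.single_eq_of_ne (Fin.succ_ne_zero k) 1
    simp [h, bvec]
  · intro i0
    rw [Finset.sum_eq_single i0]
    · simp [bvec]
    · intro k _ hk
      rw [Pi.single_eq_of_ne (by simpa [Fin.succ_inj] using hk) 1]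
      ring
    · intro h; exact absurd (Finset.mem_univ i0) h

lemma dot_lgen (y : Fin (n + 1) → ℝ) (i j : Fin (n + 1)) :
    ∑ m, lgen i j m * y m = bvec y i + bvec y j := by
  rw [lgen, dot_snoc]
  have : ∑ k, gen i j k * y (Fin.castSucc k) =
      (bvec y i - y (Fin.last n) / 2) + (bvec y j - y (Fin.last n) / 2) := by
    simp only [gen, Pi.add_apply, add_mul, Finset.sum_add_distrib, single_dot]
  rw [this]; ring

lemma neg_snoc (p : Fin n → ℝ) :
    (Fin.snoc (-p) (-1 : ℝ) : Fin (n + 1) → ℝ) = -Fin.snoc p 1 := by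
  funext m
  refine Fin.lastCases ?_ ?_ m <;> simp

variable (G : SimpleGraph (Fin (n + 1)))

lemma gen_mem_P (i j : Fin (n + 1)) (h : G.Adj i j) : gen i j ∈ fullEdgePolytope G :=
  subset_convexHull ℝ _ ⟨i, j, h, rfl⟩

lemma lgen_mem (i j : Fin (n + 1)) (h : G.Adj i j) :
    lgen i j ∈ Omega (fullEdgePolytope G) (fullEdgePolytope G) :=
  subset_convexHull ℝ _ (Or.inl ⟨gen i j, gen_mem_P G i j h, rfl⟩)

lemma neg_lgen_mem (i j : Fin (n + 1)) (h : G.Adj i j) :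
    -lgen i j ∈ Omega (fullEdgePolytope G) (fullEdgePolytope G) :=
  subset_convexHull ℝ _ (Or.inr ⟨gen i j, gen_mem_P G i j h, by
    show (Fin.snoc (-gen i j) (-1 : ℝ) : Fin (n + 1) → ℝ) = -lgen i j
    rw [neg_snoc]; rfl⟩)

lemma mem_dual_iff (y : Fin (n + 1) → ℝ) :
    y ∈ dualPolytope (Omega (fullEdgePolytope G) (fullEdgePolytope G)) ↔
      ∀ i j, G.Adj i j → |bvec y i + bvec y j| ≤ 1 := by
  constructor
  · intro hy i j hij
    rw [abs_le]
    constructor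
    · have h1 := hy _ (neg_lgen_mem G i j hij)
      have h2 : ∑ m, (-lgen i j) m * y m = -(bvec y i + bvec y j) := by
        rw [← dot_lgen y i j, ← Finset.sum_neg_distrib]
        exact Finset.sum_congr rfl fun m _ => by simp [neg_mul]
      rw [h2] at h1; linarith
    · have h1 := hy _ (lgen_mem G i j hij)
      rwa [dot_lgen] at h1
  · intro h x hx
    have hconvhalf : Convex ℝ {x : Fin (n + 1) → ℝ | ∑ m, x m * y m ≤ 1} := by
      refine convex_halfSpace_le ⟨fun a b => ?_, fun c a => ?_⟩ 1
      · simp [add_mul, Finset.sum_add_distrib]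
      · simp [Finset.mul_sum, smul_eq_mul, mul_assoc]
    refine convexHull_min ?_ hconvhalf hx
    rintro x (⟨p, hp, rfl⟩ | ⟨q, hq, rfl⟩)
    · -- top part
      have hC : Convex ℝ {p : Fin n → ℝ |
          (∑ k, p k * y (Fin.castSucc k)) ≤ 1 - y (Fin.last n)} := by
        refine convex_halfSpace_le ⟨fun a b => ?_, fun c a => ?_⟩ _
        · simp [add_mul, Finset.sum_add_distrib]
        · simp [Finset.mul_sum, smul_eq_mul, mul_assoc]
      have hPsub : fullEdgePolytope G ⊆ {p : Fin n → ℝ |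
          (∑ k, p k * y (Fin.castSucc k)) ≤ 1 - y (Fin.last n)} := by
        refine convexHull_min ?_ hC
        rintro _ ⟨i, j, hij, rfl⟩
        have h1 := (abs_le.mp (h i j hij)).2
        have h2 := dot_lgen y i j
        rw [lgen, dot_snoc] at h2
        show (∑ k, gen i j k * y (Fin.castSucc k)) ≤ 1 - y (Fin.last n)
        have : (∑ k, gen i j k * y (Fin.castSucc k)) + 1 * y (Fin.last n)
            = bvec y i + bvec y j := h2
        linarith
      have := hPsub hp
      show ∑ m, (Fin.snoc p (1:ℝ) : Fin (n+1) → ℝ) m * y m ≤ 1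
      rw [dot_snoc]
      simp only [Set.mem_setOf_eq] at this
      linarith
    · -- bottom part
      have hC : Convex ℝ {q : Fin n → ℝ |
          -(1 : ℝ) - y (Fin.last n) ≤ (∑ k, q k * y (Fin.castSucc k))} := by
        refine convex_halfSpace_ge ⟨fun a b => ?_, fun c a => ?_⟩ _
        · simp [add_mul, Finset.sum_add_distrib]
        · simp [Finset.mul_sum, smul_eq_mul, mul_assoc]
      have hPsub : fullEdgePolytope G ⊆ {q : Fin n → ℝ |
          -(1 : ℝ) - y (Fin.last n) ≤ (∑ k, q k * y (Fin.castSucc k))} := by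
        refine convexHull_min ?_ hC
        rintro _ ⟨i, j, hij, rfl⟩
        have h1 := (abs_le.mp (h i j hij)).1
        have h2 := dot_lgen y i j
        rw [lgen, dot_snoc] at h2
        show -(1 : ℝ) - y (Fin.last n) ≤ (∑ k, gen i j k * y (Fin.castSucc k))
        have : (∑ k, gen i j k * y (Fin.castSucc k)) + 1 * y (Fin.last n)
            = bvec y i + bvec y j := h2
        linarith
      have hq2 := hPsub hq
      show ∑ m, (Fin.snoc (-q) (-1:ℝ) : Fin (n+1) → ℝ) m * y m ≤ 1
      rw [dot_snoc]
      simp only [Set.mem_setOf_eq] at hq2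
      have : ∑ k, (-q) k * y (Fin.castSucc k) = -(∑ k, q k * y (Fin.castSucc k)) := by
        rw [← Finset.sum_neg_distrib]
        exact Finset.sum_congr rfl fun m _ => by simp [neg_mul]
      rw [this]
      linarith

/-- The span of the lifted generators. -/
def M : Submodule ℝ (Fin (n + 1) → ℝ) :=
  Submodule.span ℝ {x : Fin (n + 1) → ℝ | ∃ i j, G.Adj i j ∧ x = lgen i j}

lemma tele_mem {i j : Fin (n + 1)} (p : G.Walk i j) :
    phi i - ((-1 : ℝ) ^ p.length) • phi j ∈ M G := by
  induction p with
  | nil => simp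
  | @cons u w v h q ih =>
    have h1 : lgen u w ∈ M G := Submodule.subset_span ⟨u, w, h, rfl⟩
    have key : phi u - ((-1 : ℝ) ^ (SimpleGraph.Walk.cons h q).length) • phi v
        = lgen u w - (phi w - ((-1 : ℝ) ^ q.length) • phi v) := by
      rw [lgen_eq_phi, SimpleGraph.Walk.length_cons, pow_succ]
      module
    rw [key]
    exact Submodule.sub_mem _ h1 ih

lemma phi_mem (hconn : G.Connected) (hnb : ¬ G.Colorable 2) (i : Fin (n + 1)) :
    phi i ∈ M G := by
  obtain ⟨p, hp⟩ := exists_odd_closed_walk G hconn hnb i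
  have := tele_mem G p
  rw [hp.neg_one_pow] at this
  have h2 : (2 : ℝ) • phi i ∈ M G := by
    convert this using 1
    module
  have h3 := (M G).smul_mem (1 / 2 : ℝ) h2
  rwa [smul_smul, show (1 / 2 : ℝ) * 2 = 1 by norm_num, one_smul] at h3

lemma single_last_eq : (Pi.single (Fin.last n) (1 : ℝ) : Fin (n + 1) → ℝ)
    = (2 : ℝ) • phi 0 := by
  funext m
  refine Fin.lastCases ?_ ?_ m
  · simp [phi]
  · intro k
    have h0 : (Pi.single (0 : Fin (n + 1)) (1 : ℝ) : Fin (n + 1) → ℝ) k.succ = 0 :=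
      Pi.single_eq_of_ne (Fin.succ_ne_zero k) 1
    have h1 : (Pi.single (Fin.last n) (1 : ℝ) : Fin (n + 1) → ℝ) (Fin.castSucc k) = 0 :=
      Pi.single_eq_of_ne (Fin.ne_last_of_lt (Fin.castSucc_lt_last k)) 1
    simp [phi, h0, h1]

lemma single_castSucc_eq (k : Fin n) :
    (Pi.single (Fin.castSucc k) (1 : ℝ) : Fin (n + 1) → ℝ) = phi k.succ - phi 0 := by
  funext m
  refine Fin.lastCases ?_ ?_ m
  · have h1 : (Pi.single (Fin.castSucc k) (1 : ℝ) : Fin (n + 1) → ℝ) (Fin.last n) = 0 :=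
      Pi.single_eq_of_ne (Fin.ne_last_of_lt (Fin.castSucc_lt_last k)).symm 1
    simp [phi, h1]
  · intro k'
    have h0 : (Pi.single (0 : Fin (n + 1)) (1 : ℝ) : Fin (n + 1) → ℝ) k'.succ = 0 :=
      Pi.single_eq_of_ne (Fin.succ_ne_zero k') 1
    by_cases hk : k' = k
    · subst hk
      simp [phi, h0]
    · have h1 : (Pi.single (Fin.castSucc k) (1 : ℝ) : Fin (n + 1) → ℝ) (Fin.castSucc k') = 0 :=
        Pi.single_eq_of_ne (by simpa [Fin.castSucc_inj] using hk) 1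
      have h2 : (Pi.single k.succ (1 : ℝ) : Fin (n + 1) → ℝ) k'.succ = 0 :=
        Pi.single_eq_of_ne (by simpa [Fin.succ_inj] using hk) 1
      simp [phi, h0, h1, h2]

lemma span_top (hconn : G.Connected) (hnb : ¬ G.Colorable 2) : M G = ⊤ := by
  rw [Submodule.eq_top_iff']
  intro x
  have hsingle : ∀ r : Fin (n + 1), (Pi.single r (1 : ℝ) : Fin (n + 1) → ℝ) ∈ M G := by
    intro r
    refine Fin.lastCases ?_ ?_ r
    · rw [single_last_eq]
      exact (M G).smul_mem _ (phi_mem G hconn hnb 0)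
    · intro k
      rw [single_castSucc_eq]
      exact Submodule.sub_mem _ (phi_mem G hconn hnb k.succ) (phi_mem G hconn hnb 0)
  have hx : x = ∑ r, x r • (Pi.single r (1 : ℝ) : Fin (n + 1) → ℝ) := by
    funext m
    rw [Finset.sum_apply]
    rw [Finset.sum_eq_single m]
    · simp
    · intro r _ hr
      rw [Pi.smul_apply, Pi.single_eq_of_ne (Ne.symm hr) 1]
      simp
    · intro h; exact absurd (Finset.mem_univ m) h
  rw [hx]
  exact Submodule.sum_mem _ fun r _ => (M G).smul_mem _ (hsingle r)

lemma exists_edge (hnb : ¬ G.Colorable 2) : ∃ i j : Fin (n + 1), G.Adj i j := by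
  by_contra h
  push_neg at h
  exact hnb ⟨SimpleGraph.Coloring.mk (fun _ => (0 : Fin 2))
    (fun {u w} huw => absurd huw (h u w))⟩

lemma zero_mem_Omega (hnb : ¬ G.Colorable 2) :
    (0 : Fin (n + 1) → ℝ) ∈ Omega (fullEdgePolytope G) (fullEdgePolytope G) := by
  obtain ⟨i, j, hij⟩ := exists_edge G hnb
  have hc := convex_convexHull ℝ (liftTop (fullEdgePolytope G) ∪ liftBot (fullEdgePolytope G))
  have := hc (lgen_mem G i j hij) (neg_lgen_mem G i j hij)
    (by norm_num : (0:ℝ) ≤ 1/2) (by norm_num : (0:ℝ) ≤ 1/2) (by norm_num)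
  have h0 : (1/2 : ℝ) • lgen i j + (1/2 : ℝ) • (-lgen i j) = 0 := by module
  rw [h0] at this
  exact this

lemma vectorSpan_top (hconn : G.Connected) (hnb : ¬ G.Colorable 2) :
    vectorSpan ℝ (Omega (fullEdgePolytope G) (fullEdgePolytope G)) = ⊤ := by
  rw [eq_top_iff, ← span_top G hconn hnb, M]
  rw [Submodule.span_le]
  rintro x ⟨i, j, hij, rfl⟩
  have := vsub_mem_vectorSpan ℝ (lgen_mem G i j hij) (zero_mem_Omega G hnb)
  simpa using this

lemma affineSpan_top (hconn : G.Connected) (hnb : ¬ G.Colorable 2) :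
    affineSpan ℝ (Omega (fullEdgePolytope G) (fullEdgePolytope G)) = ⊤ :=
  (AffineSubspace.affineSpan_eq_top_iff_vectorSpan_eq_top_of_nonempty ℝ _ _
    ⟨0, zero_mem_Omega G hnb⟩).mpr (vectorSpan_top G hconn hnb)

lemma neg_mem_Omega {x : Fin (n + 1) → ℝ}
    (hx : x ∈ Omega (fullEdgePolytope G) (fullEdgePolytope G)) :
    -x ∈ Omega (fullEdgePolytope G) (fullEdgePolytope G) := by
  have hBT : liftBot (fullEdgePolytope G) = -liftTop (fullEdgePolytope G) := by
    ext z
    simp only [liftBot, liftTop, Set.mem_neg, Set.mem_image]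
    constructor
    · rintro ⟨p, hp, rfl⟩
      exact ⟨p, hp, by rw [neg_snoc, neg_neg]⟩
    · rintro ⟨p, hp, hz⟩
      exact ⟨p, hp, by rw [neg_snoc, hz, neg_neg]⟩
  have hnu : ∀ (A B : Set (Fin (n + 1) → ℝ)), -(A ∪ B) = (-A) ∪ (-B) := by
    intro A B; ext z; simp [Set.mem_neg, Set.mem_union]
  have hsets : -(liftTop (fullEdgePolytope G) ∪ liftBot (fullEdgePolytope G))
      = liftTop (fullEdgePolytope G) ∪ liftBot (fullEdgePolytope G) := by
    rw [hnu, hBT, neg_neg, Set.union_comm]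
  have hOm : -(Omega (fullEdgePolytope G) (fullEdgePolytope G))
      = Omega (fullEdgePolytope G) (fullEdgePolytope G) := by
    rw [Omega, ← convexHull_neg, hsets]
  rw [← hOm, Set.mem_neg, neg_neg]
  exact hx

lemma zero_mem_interior (hconn : G.Connected) (hnb : ¬ G.Colorable 2) :
    (0 : Fin (n + 1) → ℝ) ∈ interior (Omega (fullEdgePolytope G) (fullEdgePolytope G)) := by
  have hcv : Convex ℝ (Omega (fullEdgePolytope G) (fullEdgePolytope G)) :=
    convex_convexHull ℝ _
  have hne : (interior (Omega (fullEdgePolytope G) (fullEdgePolytope G))).Nonempty :=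
    (hcv.interior_nonempty_iff_affineSpan_eq_top).mpr (affineSpan_top G hconn hnb)
  obtain ⟨z, hz⟩ := hne
  have hneg : -z ∈ Omega (fullEdgePolytope G) (fullEdgePolytope G) :=
    neg_mem_Omega G (interior_subset hz)
  have := hcv.combo_interior_self_mem_interior hz hneg
    (by norm_num : (0:ℝ) < 1/2) (by norm_num : (0:ℝ) ≤ 1/2) (by norm_num)
  have h0 : (1/2 : ℝ) • z + (1/2 : ℝ) • (-z) = 0 := by module
  rwa [h0] at this

lemma extreme_lattice (y : Fin (n + 1) → ℝ)
    (hy : y ∈ Set.extremePoints ℝ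
      (dualPolytope (Omega (fullEdgePolytope G) (fullEdgePolytope G)))) :
    IsLatticePt y := by
  classical
  obtain ⟨hyD, hyext⟩ := hy
  have hC : ∀ i j, G.Adj i j → |bvec y i + bvec y j| ≤ 1 := (mem_dual_iff G y).1 hyD
  -- the tight graph
  set H : SimpleGraph (Fin (n + 1)) :=
    { Adj := fun i j => G.Adj i j ∧ (bvec y i + bvec y j = 1 ∨ bvec y i + bvec y j = -1)
      symm := by
        constructor
        intro a b hab
        refine ⟨hab.1.symm, ?_⟩
        rw [add_comm]
        exact hab.2
      loopless := ⟨fun a ha => G.loopless.irrefl a ha.1⟩ } with hHdef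
  have hHadj : ∀ i j, H.Adj i j ↔
      (G.Adj i j ∧ (bvec y i + bvec y j = 1 ∨ bvec y i + bvec y j = -1)) := fun i j => Iff.rfl
  -- rigidity from extremality
  have hK : ∀ δ : Fin (n + 1) → ℝ, (∀ i j, H.Adj i j → δ i + δ j = 0) → δ = 0 := by
    intro δ hδ
    by_contra hδ0
    set d : Fin (n + 1) → ℝ := Fin.snoc (fun k => δ k.succ - δ 0) (2 * δ 0) with hddef
    have hbd : bvec d = δ := by
      funext m
      refine Fin.cases ?_ ?_ m
      · show d (Fin.last n) / 2 = δ 0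
        rw [hddef]
        simp [Fin.snoc_last]
        try ring
      · intro k
        show d (Fin.castSucc k) + d (Fin.last n) / 2 = δ k.succ
        rw [hddef]
        simp [Fin.snoc_castSucc, Fin.snoc_last]
        try ring
    have hdne : d ≠ 0 := by
      intro h
      apply hδ0
      rw [← hbd, h, bvec_zero]
    -- the slack edges
    set A : Finset (Fin (n + 1) × Fin (n + 1)) := Finset.univ.filter
      (fun p => G.Adj p.1 p.2 ∧
        ¬(bvec y p.1 + bvec y p.2 = 1 ∨ bvec y p.1 + bvec y p.2 = -1)) with hAdef
    set f : Fin (n + 1) × Fin (n + 1) → ℝ :=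
      fun p => (1 - |bvec y p.1 + bvec y p.2|) / (|δ p.1 + δ p.2| + 1) with hfdef
    have habs_lt : ∀ p ∈ A, |bvec y p.1 + bvec y p.2| < 1 := by
      intro p hp
      obtain ⟨-, hadj, ht⟩ := Finset.mem_filter.mp hp
      refine lt_of_le_of_ne (hC _ _ hadj) (fun he => ht ?_)
      exact (abs_eq (by norm_num : (0:ℝ) ≤ 1)).mp he
    have hfpos : ∀ p ∈ A, 0 < f p := by
      intro p hp
      have := habs_lt p hp
      rw [hfdef]
      have h2 : (0:ℝ) < |δ p.1 + δ p.2| + 1 := by positivity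
      exact div_pos (by linarith) h2
    set ε : ℝ := if hA : A.Nonempty then A.inf' hA f else 1 with hεdef
    have hεpos : 0 < ε := by
      rw [hεdef]
      split_ifs with hA
      · exact (Finset.lt_inf'_iff hA).mpr (fun p hp => hfpos p hp)
      · norm_num
    have hεle : ∀ p ∈ A, ε ≤ f p := by
      intro p hp
      rw [hεdef, dif_pos ⟨p, hp⟩]
      exact Finset.inf'_le f hp
    have key : ∀ c : ℝ, |c| ≤ ε → y + c • d ∈
        dualPolytope (Omega (fullEdgePolytope G) (fullEdgePolytope G)) := by
      intro c hc
      rw [mem_dual_iff]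
      intro i j hij
      have hb : bvec (y + c • d) i + bvec (y + c • d) j
          = (bvec y i + bvec y j) + c * (δ i + δ j) := by
        rw [bvec_add_smul, bvec_add_smul, hbd]
        ring
      rw [hb]
      by_cases ht : bvec y i + bvec y j = 1 ∨ bvec y i + bvec y j = -1
      · have hz : δ i + δ j = 0 := hδ i j ((hHadj i j).mpr ⟨hij, ht⟩)
        rw [hz, mul_zero, add_zero]
        rcases ht with h | h <;> rw [h] <;> norm_num
      · have hpA : (i, j) ∈ A := by
          rw [hAdef, Finset.mem_filter]
          exact ⟨Finset.mem_univ _, hij, ht⟩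
        have hlt := habs_lt (i, j) hpA
        have h1 : |c| * |δ i + δ j| ≤ ε * |δ i + δ j| :=
          mul_le_mul_of_nonneg_right hc (abs_nonneg _)
        have h2 : ε * |δ i + δ j| ≤ f (i, j) * |δ i + δ j| :=
          mul_le_mul_of_nonneg_right (hεle _ hpA) (abs_nonneg _)
        have h3 : f (i, j) * |δ i + δ j|
            ≤ 1 - |bvec y i + bvec y j| := by
          rw [hfdef]
          simp only
          rw [div_mul_eq_mul_div, div_le_iff₀ (by positivity : (0:ℝ) < |δ i + δ j| + 1)]
          nlinarith [abs_nonneg (δ i + δ j), hlt.le]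
        calc |(bvec y i + bvec y j) + c * (δ i + δ j)|
            ≤ |bvec y i + bvec y j| + |c * (δ i + δ j)| := abs_add_le _ _
          _ = |bvec y i + bvec y j| + |c| * |δ i + δ j| := by rw [abs_mul]
          _ ≤ 1 := by linarith
    have hm1 := key ε (by rw [abs_of_pos hεpos])
    have hm2 := key (-ε) (by rw [abs_neg, abs_of_pos hεpos])
    have hseg : y ∈ openSegment ℝ (y + ε • d) (y + (-ε) • d) :=
      ⟨1/2, 1/2, by norm_num, by norm_num, by norm_num, by module⟩
    have hres := hyext hm1 hm2 hseg
    have : ε • d = 0 := by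
      have := congrArg (fun z => z - y) hres
      simpa [add_sub_cancel_left] using this
    exact hdne ((smul_eq_zero.mp this).resolve_left (ne_of_gt hεpos))
  -- walk telescoping in the tight graph
  have hT2 : ∀ (i j : Fin (n + 1)) (p : H.Walk i j), ∃ m : ℤ,
      bvec y i = (m : ℝ) + (-1 : ℝ) ^ p.length * bvec y j ∧
        m % 2 = (p.length : ℤ) % 2 := by
    intro i j p
    induction p with
    | nil => exact ⟨0, by simp, by simp⟩
    | @cons u w v h q ih =>
      obtain ⟨m, hm, hpar⟩ := ih
      have hsum := h.2
      rcases hsum with he | he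
      · refine ⟨1 - m, ?_, ?_⟩
        · rw [SimpleGraph.Walk.length_cons, pow_succ]
          push_cast
          linear_combination he - hm
        · rw [SimpleGraph.Walk.length_cons]
          push_cast
          omega
      · refine ⟨-1 - m, ?_, ?_⟩
        · rw [SimpleGraph.Walk.length_cons, pow_succ]
          push_cast
          linear_combination he - hm
        · rw [SimpleGraph.Walk.length_cons]
          push_cast
          omega
  -- every coordinate is a half-odd-integer
  have hhalf : ∀ i : Fin (n + 1), ∃ m : ℤ, m % 2 = 1 ∧ 2 * bvec y i = (m : ℝ) := by
    intro i
    obtain ⟨p, hodd⟩ := exists_odd_closed_walk_of_rigid H hK i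
    obtain ⟨m, hm, hpar⟩ := hT2 i i p
    rw [hodd.neg_one_pow] at hm
    refine ⟨m, ?_, by linarith⟩
    have := Nat.odd_iff.mp hodd
    omega
  -- conclude
  intro r
  refine Fin.lastCases ?_ ?_ r
  · obtain ⟨m0, -, h0⟩ := hhalf 0
    have hb0 : bvec y 0 = y (Fin.last n) / 2 := rfl
    exact ⟨m0, by rw [hb0] at h0; linarith⟩
  · intro k
    obtain ⟨m0, ho0, h0⟩ := hhalf 0
    obtain ⟨m1, ho1, h1⟩ := hhalf k.succ
    have hb0 : bvec y 0 = y (Fin.last n) / 2 := rfl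
    have hb1 : bvec y k.succ = y (Fin.castSucc k) + y (Fin.last n) / 2 := rfl
    obtain ⟨z, hz⟩ : ∃ z : ℤ, m1 - m0 = 2 * z := ⟨(m1 - m0) / 2, by omega⟩
    refine ⟨z, ?_⟩
    have hzr : (m1 : ℝ) - m0 = 2 * z := by exact_mod_cast congrArg (fun t : ℤ => (t : ℝ)) hz
    rw [hb0] at h0
    rw [hb1] at h1
    linarith

end

end Stmt8Aux

theorem stmt8 (n : ℕ) (G : SimpleGraph (Fin (n + 1)))
    (hconn : G.Connected) (hnb : ¬ G.Colorable 2) :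
    Module.finrank ℝ
        (affineSpan ℝ (Omega (fullEdgePolytope G) (fullEdgePolytope G))).direction
      = n + 1 ∧
    IsReflexive (Omega (fullEdgePolytope G) (fullEdgePolytope G)) := by
  constructor
  · rw [Stmt8Aux.affineSpan_top G hconn hnb, AffineSubspace.direction_top, finrank_top]
    exact Module.finrank_fin_fun ℝ
  · exact ⟨Stmt8Aux.zero_mem_interior G hconn hnb,
      fun y hy => Stmt8Aux.extreme_lattice G y hy⟩
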